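/- arXiv:1710.08546 — 5 statements merged into one kernel-verified Lean document; each statement's English description precedes it below -/
import Mathlib

section
/- Let a < b, and let c ∈ ℝ with f_bw·(b-a) ≤ c ≤ f_u·(b-a) where 0 < f_bw ≤ f_u. Among all integrable F : [a,b] → [f_bw, f_u] with ∫_a^b F = c, the function F*(t) = f_bw for t ∈ [a, a+τ] and F*(t) = f_u for t ∈ (a+τ, b], where τ = (f_u(b-a) - c)/(f_u - f_bw), minimizes ∫_a^b G(t) dt where G(t) = ∫_a^t F(s) ds. -/
/-! The bang-bang control is optimal pointwise, not just on average. Up to the switch its primitive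
`G*` grows at the least admissible rate `f_bw`, so it lies below the primitive `G` of any admissible
`F`. After the switch both primitives still have to reach the same value `c` at `b`, and `G*` gets
there at the greatest admissible rate `f_u`, so again `G* ≤ G`. Integrating `G* ≤ G` over `[a, b]`
gives the claim. -/

open MeasureTheory intervalIntegral

/-- The low-then-high bang-bang control with switching time `a + τ`. -/
noncomputable def lowHigh (a τ f_bw f_u : ℝ) : ℝ → ℝ := fun t => if t ≤ a + τ then f_bw else f_u

open Set

section LowHigh

variable {a τ lo hi : ℝ}

lemma lowHigh_intervalIntegrable (u v : ℝ) :
    IntervalIntegrable (lowHigh a τ lo hi) volume u v := by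
  have hmeas : Measurable (lowHigh a τ lo hi) :=
    Measurable.ite measurableSet_Iic measurable_const measurable_const
  refine (intervalIntegrable_const (c := max |lo| |hi|)).mono_fun'
    hmeas.aestronglyMeasurable (Filter.Eventually.of_forall fun s => ?_)
  simp only [lowHigh, Real.norm_eq_abs]
  split
  · exact le_max_left _ _
  · exact le_max_right _ _

lemma integral_lowHigh_of_le_switch {u t : ℝ} (hu : u ≤ a + τ) (ht : t ≤ a + τ) :
    ∫ s in u..t, lowHigh a τ lo hi s = (t - u) * lo := by
  rw [integral_congr (f := lowHigh a τ lo hi) (g := fun _ => lo)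
    fun s hs => if_pos (hs.2.trans (max_le hu ht))]
  simp

lemma integral_lowHigh_of_switch_le {u t : ℝ} (hu : a + τ ≤ u) (ht : a + τ ≤ t) :
    ∫ s in u..t, lowHigh a τ lo hi s = (t - u) * hi := by
  rw [integral_congr_ae (f := lowHigh a τ lo hi) (g := fun _ => hi)
    (Filter.Eventually.of_forall fun s hs => if_neg (not_le.mpr ((le_min hu ht).trans_lt hs.1)))]
  simp

lemma integral_lowHigh {b : ℝ} (hτ : 0 ≤ τ) (hτb : a + τ ≤ b) :
    ∫ s in a..b, lowHigh a τ lo hi s = τ * lo + (b - a - τ) * hi := by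
  rw [← integral_add_adjacent_intervals (lowHigh_intervalIntegrable a (a + τ))
      (lowHigh_intervalIntegrable (a + τ) b),
    integral_lowHigh_of_le_switch (by linarith) le_rfl,
    integral_lowHigh_of_switch_le le_rfl hτb]
  ring

/- When `lo = hi` the division returns `0`, which is still the right switching time since then
`c = hi * (b - a)`. -/
lemma switchTime_spec {b c : ℝ} (hab : a ≤ b) (hlohi : lo ≤ hi) (hc₁ : lo * (b - a) ≤ c)
    (hc₂ : c ≤ hi * (b - a)) (hτ : τ = (hi * (b - a) - c) / (hi - lo)) :
    0 ≤ τ ∧ τ ≤ b - a ∧ τ * lo + (b - a - τ) * hi = c := by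
  rcases hlohi.eq_or_lt with rfl | hlt
  · have hc : c = lo * (b - a) := le_antisymm hc₂ hc₁
    simp only [sub_self, div_zero] at hτ
    subst hτ hc
    exact ⟨le_rfl, sub_nonneg.mpr hab, by ring⟩
  · have hpos : 0 < hi - lo := sub_pos.mpr hlt
    have hτmul : τ * (hi - lo) = hi * (b - a) - c := by
      rw [hτ, div_mul_cancel₀ _ hpos.ne']
    refine ⟨hτ ▸ div_nonneg (by linarith) hpos.le, ?_, by linarith⟩
    rw [hτ, div_le_iff₀ hpos]
    linarith

lemma integral_lowHigh_le_integral {b t : ℝ} {F : ℝ → ℝ}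
    (hF : IntervalIntegrable F volume a b) (hFmem : ∀ s ∈ Icc a b, F s ∈ Icc lo hi)
    (hFint : ∫ s in a..b, F s = ∫ s in a..b, lowHigh a τ lo hi s) (ht : t ∈ Icc a b) :
    ∫ s in a..t, lowHigh a τ lo hi s ≤ ∫ s in a..t, F s := by
  have hFat : IntervalIntegrable F volume a t :=
    hF.mono_set (uIcc_subset_uIcc_left (by rwa [uIcc_of_le (ht.1.trans ht.2)]))
  rcases le_or_gt t (a + τ) with hlow | hhigh
  · rw [integral_lowHigh_of_le_switch (ht.1.trans hlow) hlow]
    simpa using integral_mono_on ht.1 intervalIntegrable_const hFat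
      fun s hs => (hFmem s ⟨hs.1, hs.2.trans ht.2⟩).1
  · have hFtb : IntervalIntegrable F volume t b :=
      hF.mono_set (uIcc_subset_uIcc_right (by rwa [uIcc_of_le (ht.1.trans ht.2)]))
    have hFtail : ∫ s in t..b, F s ≤ (b - t) * hi := by
      simpa using integral_mono_on ht.2 hFtb intervalIntegrable_const
        fun s hs => (hFmem s ⟨ht.1.trans hs.1, hs.2⟩).2
    rw [← integral_add_adjacent_intervals hFat hFtb,
      ← integral_add_adjacent_intervals (lowHigh_intervalIntegrable a t)
        (lowHigh_intervalIntegrable t b),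
      integral_lowHigh_of_switch_le hhigh.le (hhigh.le.trans ht.2)] at hFint
    linarith

end LowHigh

theorem bang_bang_min_general (a b f_bw f_u c : ℝ) (hab : a < b)
    (hbu : f_bw ≤ f_u)
    (hc₁ : f_bw * (b - a) ≤ c) (hc₂ : c ≤ f_u * (b - a)) :
    (∫ t in a..b, lowHigh a ((f_u * (b - a) - c) / (f_u - f_bw)) f_bw f_u t) = c ∧
    ∀ F : ℝ → ℝ, IntervalIntegrable F volume a b →
      (∀ t ∈ Set.Icc a b, F t ∈ Set.Icc f_bw f_u) →
      (∫ t in a..b, F t) = c →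
      (∫ t in a..b, ∫ s in a..t,
          lowHigh a ((f_u * (b - a) - c) / (f_u - f_bw)) f_bw f_u s) ≤
        ∫ t in a..b, ∫ s in a..t, F s := by
  set τ := (f_u * (b - a) - c) / (f_u - f_bw) with hτ
  obtain ⟨hτ0, hτb, hτc⟩ := switchTime_spec hab.le hbu hc₁ hc₂ hτ
  have hint : ∫ t in a..b, lowHigh a τ f_bw f_u t = c := by
    rw [integral_lowHigh hτ0 (by linarith), hτc]
  refine ⟨hint, fun F hF hFmem hFc => ?_⟩
  have primitive_integrable {g : ℝ → ℝ} (hg : IntervalIntegrable g volume a b) :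
      IntervalIntegrable (fun t => ∫ s in a..t, g s) volume a b :=
    (continuousOn_primitive_interval' hg left_mem_uIcc).intervalIntegrable
  exact integral_mono_on hab.le (primitive_integrable (lowHigh_intervalIntegrable a b))
    (primitive_integrable hF) fun t ht =>
      integral_lowHigh_le_integral hF hFmem (hFc.trans hint.symm) ht

theorem bang_bang_min (a b f_bw f_u c : ℝ) (hab : a < b)
    (hbw : 0 < f_bw) (hbu : f_bw ≤ f_u)
    (hc₁ : f_bw * (b - a) ≤ c) (hc₂ : c ≤ f_u * (b - a)) :
    (∫ t in a..b, lowHigh a ((f_u * (b - a) - c) / (f_u - f_bw)) f_bw f_u t) = c ∧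
    ∀ F : ℝ → ℝ, IntervalIntegrable F volume a b →
      (∀ t ∈ Set.Icc a b, F t ∈ Set.Icc f_bw f_u) →
      (∫ t in a..b, F t) = c →
      (∫ t in a..b, ∫ s in a..t,
          lowHigh a ((f_u * (b - a) - c) / (f_u - f_bw)) f_bw f_u s) ≤
        ∫ t in a..b, ∫ s in a..t, F s :=
  bang_bang_min_general a b f_bw f_u c hab hbu hc₁ hc₂
end

section
/- Let a < b, 0 < f_bw ≤ f_u, and c with f_bw·(b-a) ≤ c ≤ f_u·(b-a). Among all integrable F : [a,b] → [f_bw, f_u] with ∫_a^b F = c, the function F*(t) = f_u for t ∈ [a, a+τ] and F*(t) = f_bw for t ∈ (a+τ, b], where τ = (c - f_bw(b-a))/(f_u - f_bw), maximizes ∫_a^b G(t) dt where G(t) = ∫_a^t F(s) ds. -/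
open MeasureTheory intervalIntegral

/-- The high-then-low bang-bang control with switching time `a + τ`. -/
noncomputable def highLow (a τ f_bw f_u : ℝ) : ℝ → ℝ := fun t => if t ≤ a + τ then f_u else f_bw

theorem bang_bang_max (a b f_bw f_u c : ℝ) (hab : a < b)
    (hbw : 0 < f_bw) (hbu : f_bw ≤ f_u)
    (hc₁ : f_bw * (b - a) ≤ c) (hc₂ : c ≤ f_u * (b - a)) :
    (∫ t in a..b, highLow a ((c - f_bw * (b - a)) / (f_u - f_bw)) f_bw f_u t) = c ∧
    ∀ F : ℝ → ℝ, IntervalIntegrable F volume a b →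
      (∀ t ∈ Set.Icc a b, F t ∈ Set.Icc f_bw f_u) →
      (∫ t in a..b, F t) = c →
      (∫ t in a..b, ∫ s in a..t, F s) ≤
        ∫ t in a..b, ∫ s in a..t,
          highLow a ((c - f_bw * (b - a)) / (f_u - f_bw)) f_bw f_u s := by
  set τ : ℝ := (c - f_bw * (b - a)) / (f_u - f_bw) with hτdef
  set H : ℝ → ℝ := highLow a τ f_bw f_u with hHdef
  -- basic facts about τ
  have hτ0 : 0 ≤ τ := by
    rcases eq_or_lt_of_le hbu with heq | hlt
    · have : c - f_bw * (b - a) = 0 := by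
        have := heq ▸ hc₂
        linarith [le_antisymm this hc₁]
      simp [hτdef, this]
    · exact div_nonneg (by linarith) (by linarith)
  have hτb : τ ≤ b - a := by
    rcases eq_or_lt_of_le hbu with heq | hlt
    · have : c - f_bw * (b - a) = 0 := by
        have := heq ▸ hc₂
        linarith [le_antisymm this hc₁]
      simp [hτdef, this]
      linarith
    · rw [hτdef, div_le_iff₀ (by linarith)]
      nlinarith
  have hkey : f_u * τ + f_bw * ((b - a) - τ) = c := by
    rcases eq_or_lt_of_le hbu with heq | hlt
    · have hc : c = f_bw * (b - a) := le_antisymm (heq ▸ hc₂) hc₁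
      have : c - f_bw * (b - a) = 0 := by linarith
      rw [← heq]
      simp [hτdef, this]
      linarith
    · have hne : f_u - f_bw ≠ 0 := by linarith
      have : τ * (f_u - f_bw) = c - f_bw * (b - a) := by
        rw [hτdef, div_mul_cancel₀ _ hne]
      nlinarith
  set m : ℝ := a + τ with hmdef
  have ham : a ≤ m := by simp [hmdef]; linarith
  have hmb : m ≤ b := by simp [hmdef]; linarith
  -- H is antitone, hence interval integrable
  have hHanti : ∀ u v : ℝ, IntervalIntegrable H volume u v := by
    intro u v
    apply AntitoneOn.intervalIntegrable
    intro x _ y _ hxy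
    by_cases h1 : y ≤ a + τ
    · have h2 : x ≤ a + τ := hxy.trans h1
      simp [hHdef, highLow, h1, h2]
    · by_cases h2 : x ≤ a + τ
      · simp [hHdef, highLow, h1, h2, hbu]
      · simp [hHdef, highLow, h1, h2]
  -- integral of H on [a,t] for t ≤ m
  have hH1 : ∀ t, a ≤ t → t ≤ m → (∫ s in a..t, H s) = f_u * (t - a) := by
    intro t hat htm
    rw [integral_congr (g := fun _ => f_u) (fun s hs => ?_),
      intervalIntegral.integral_const, smul_eq_mul, mul_comm]
    rw [Set.uIcc_of_le hat] at hs
    exact if_pos (hs.2.trans htm)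
  -- integral of H on [m,t] for m ≤ t
  have hH2 : ∀ t, m ≤ t → (∫ s in m..t, H s) = f_bw * (t - m) := by
    intro t hmt
    rw [intervalIntegral.integral_congr_ae (g := fun _ => f_bw),
      intervalIntegral.integral_const, smul_eq_mul, mul_comm]
    filter_upwards with x hx
    rw [Set.uIoc_of_le hmt] at hx
    exact if_neg (not_le.2 hx.1)
  -- integral of H on [a,t] for m ≤ t
  have hH3 : ∀ t, m ≤ t → (∫ s in a..t, H s) = f_u * τ + f_bw * (t - m) := by
    intro t hmt
    rw [← integral_add_adjacent_intervals (hHanti a m) (hHanti m t),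
      hH1 m ham le_rfl, hH2 t hmt, hmdef]
    ring_nf
  have hHc : (∫ t in a..b, H t) = c := by
    rw [hH3 b hmb, hmdef]
    have : b - (a + τ) = (b - a) - τ := by ring
    rw [this]
    exact hkey
  refine ⟨hHc, ?_⟩
  intro F hF hFbound hFc
  -- pointwise inequality of primitives
  have hpt : ∀ t ∈ Set.Icc a b, (∫ s in a..t, F s) ≤ ∫ s in a..t, H s := by
    intro t ht
    obtain ⟨hat, htb⟩ := ht
    have hFsub : ∀ u v, u ∈ Set.Icc a b → v ∈ Set.Icc a b →
        IntervalIntegrable F volume u v := by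
      intro u v hu hv
      refine hF.mono_set ?_
      rw [Set.uIcc_of_le hab.le]
      exact Set.uIcc_subset_Icc hu hv
    rcases le_or_gt t m with htm | hmt
    · rw [hH1 t hat htm]
      have : (∫ s in a..t, F s) ≤ ∫ s in a..t, f_u := by
        apply integral_mono_on hat (hFsub a t ⟨le_rfl, hab.le⟩ ⟨hat, htb⟩)
          intervalIntegrable_const
        intro s hs
        exact (hFbound s ⟨hs.1, hs.2.trans htb⟩).2
      rw [intervalIntegral.integral_const, smul_eq_mul] at this
      linarith
    · have hsplit : (∫ s in a..t, F s) + (∫ s in t..b, F s) = c := by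
        rw [integral_add_adjacent_intervals (hFsub a t ⟨le_rfl, hab.le⟩ ⟨hat, htb⟩)
          (hFsub t b ⟨hat, htb⟩ ⟨hab.le, le_rfl⟩)]
        exact hFc
      have hlow : f_bw * (b - t) ≤ ∫ s in t..b, F s := by
        have : (∫ s in t..b, f_bw) ≤ ∫ s in t..b, F s := by
          apply integral_mono_on htb intervalIntegrable_const
            (hFsub t b ⟨hat, htb⟩ ⟨hab.le, le_rfl⟩)
          intro s hs
          exact (hFbound s ⟨hat.trans hs.1, hs.2⟩).1
        rw [intervalIntegral.integral_const, smul_eq_mul] at this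
        linarith
      rw [hH3 t hmt.le]
      have hmeq : f_u * τ + f_bw * (t - m) = c - f_bw * (b - t) := by
        have : m = a + τ := hmdef
        nlinarith [hkey]
      rw [hmeq]
      linarith
  -- integrability of the primitives
  have hFprim : IntervalIntegrable (fun t => ∫ s in a..t, F s) volume a b := by
    apply ContinuousOn.intervalIntegrable
    apply continuousOn_primitive_interval
    rw [Set.uIcc_of_le hab.le, ← intervalIntegrable_iff_integrableOn_Icc_of_le hab.le]
    exact hF
  have hHprim : IntervalIntegrable (fun t => ∫ s in a..t, H s) volume a b := by
    apply ContinuousOn.intervalIntegrable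
    apply continuousOn_primitive_interval
    rw [Set.uIcc_of_le hab.le, ← intervalIntegrable_iff_integrableOn_Icc_of_le hab.le]
    exact hHanti a b
  exact integral_mono_on hab.le hFprim hHprim hpt
end

section
/- Let u : [0,T] → ℝ be the piecewise linear function defined by u(t) = u₁ + βt on [0,T₁], u(t) = u(T₁) - f_fw(t-T₁) on [T₁, T₁+T₂], u(t) = u(T₁+T₂) + β(t-T₁-T₂) on [T₁+T₂, T/2], and u(t+T/2) = u(t) for t ∈ [0, T/2], where T₁+T₂+T₃ = T/2, T₂ = (T/2)(1-ρ)/(1+ρ) and β(T₁+T₃) = f_fw T₂, with α = (f_bw+f_fw)/2, β = (f_bw - f_fw)/2, ρ = β/α. Then (1/T)∫_0^T u(t) dt = u₁ + β T₁ - T f_fw β/(4α). -/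
/-!
On each half-period `u` is affine on three consecutive intervals, so its integral there is a sum
of three trapezoids. The balance condition `β (T₁ + T₃) = f_fw T₂` (the two slopes cancel over a
half-period) collapses that sum to `(T / 2) (u₁ + β T₁ - f_fw T₂ / 2)`, and together with
`T₁ + T₂ + T₃ = T / 2` it gives `α T₂ = β T / 2`, i.e. `f_fw T₂ / 2 = T f_fw β / (4 α)`.
-/

open MeasureTheory intervalIntegral Set

section AffineOnInterval

variable {u : ℝ → ℝ} {a b m : ℝ}

lemma intervalIntegrable_of_eqOn_affine (hab : a ≤ b)
    (hu : ∀ t ∈ Icc a b, u t = u a + m * (t - a)) : IntervalIntegrable u volume a b :=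
  ContinuousOn.intervalIntegrable_of_Icc hab (ContinuousOn.congr (by fun_prop) hu)

lemma integral_eq_trapezoid_of_eqOn_affine (hab : a ≤ b)
    (hu : ∀ t ∈ Icc a b, u t = u a + m * (t - a)) :
    ∫ t in a..b, u t = (b - a) * (u a + u b) / 2 := by
  rw [integral_congr (by rwa [uIcc_of_le hab]), hu b ⟨hab, le_rfl⟩,
    integral_add intervalIntegrable_const
      ((by fun_prop : Continuous fun t => m * (t - a)).intervalIntegrable _ _),
    intervalIntegral.integral_const, intervalIntegral.integral_const_mul,
    integral_comp_sub_right (fun t => t), integral_id]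
  simp only [smul_eq_mul, sub_self]
  ring

end AffineOnInterval

lemma integral_zero_two_mul_of_add_eq {u : ℝ → ℝ} {p : ℝ} (hp : 0 ≤ p)
    (hper : ∀ t ∈ Icc 0 p, u (t + p) = u t) (hu : IntervalIntegrable u volume 0 p) :
    ∫ t in 0..2 * p, u t = 2 * ∫ t in 0..p, u t := by
  have hu' : IntervalIntegrable u volume p (2 * p) := by
    have hshift := hu.comp_sub_right p
    rw [zero_add, ← two_mul] at hshift
    refine (intervalIntegrable_congr fun x hx => ?_).mp hshift
    rw [uIoc_of_le (by linarith)] at hx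
    simpa using (hper (x - p) ⟨by linarith [hx.1], by linarith [hx.2]⟩).symm
  have hsecond : ∫ t in p..2 * p, u t = ∫ t in 0..p, u t := by
    have hshift := integral_comp_add_right (a := 0) (b := p) u p
    rw [zero_add, ← two_mul] at hshift
    rw [← hshift]
    exact integral_congr fun t ht => hper t (by rwa [uIcc_of_le hp] at ht)
  rw [← integral_add_adjacent_intervals hu hu', hsecond, two_mul]

lemma mul_div_eq_of_balance {T T₁ T₂ T₃ f α β : ℝ} (hT : T ≠ 0) (hα : α = β + f)
    (hsum : T₁ + T₂ + T₃ = T / 2) (hbal : β * (T₁ + T₃) = f * T₂) :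
    T * f * β / (4 * α) = f * T₂ / 2 := by
  have hαT₂ : α * T₂ = β * (T / 2) := by linear_combination T₂ * hα + β * hsum - hbal
  rcases eq_or_ne α 0 with hα0 | hα0
  -- `α = 0` forces `β = f = 0`, so both sides vanish despite the division by zero.
  · have hβ : β = 0 := by
      simpa [hα0, hT] using hαT₂.symm
    have hf : f = 0 := by linarith
    simp [hα0, hβ, hf]
  · field_simp
    linear_combination (-4 * f) * hαT₂

theorem average_velocity_general (T T₁ T₂ T₃ f_bw f_fw u₁ : ℝ) (u : ℝ → ℝ)
    (hT : 0 < T)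
    (hT₁ : 0 ≤ T₁) (hT₂ : 0 ≤ T₂) (hT₃ : 0 ≤ T₃)
    (α β : ℝ) (hα : α = (f_bw + f_fw) / 2) (hβ : β = (f_bw - f_fw) / 2)
    (hsum : T₁ + T₂ + T₃ = T / 2)
    (hbal : β * (T₁ + T₃) = f_fw * T₂)
    (hu1 : ∀ t ∈ Set.Icc 0 T₁, u t = u₁ + β * t)
    (hu2 : ∀ t ∈ Set.Icc T₁ (T₁ + T₂), u t = u T₁ - f_fw * (t - T₁))
    (hu3 : ∀ t ∈ Set.Icc (T₁ + T₂) (T / 2),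
      u t = u (T₁ + T₂) + β * (t - (T₁ + T₂)))
    (hper : ∀ t ∈ Set.Icc 0 (T / 2), u (t + T / 2) = u t) :
    (1 / T) * ∫ t in (0 : ℝ)..T, u t = u₁ + β * T₁ - T * f_fw * β / (4 * α) := by
  have h₁₂ : T₁ ≤ T₁ + T₂ := by linarith
  have h₂₃ : T₁ + T₂ ≤ T / 2 := by linarith
  have hu1' : ∀ t ∈ Icc 0 T₁, u t = u 0 + β * (t - 0) := fun t ht => by
    rw [hu1 t ht, hu1 0 ⟨le_rfl, hT₁⟩]; ring
  have hu2' : ∀ t ∈ Icc T₁ (T₁ + T₂), u t = u T₁ + -f_fw * (t - T₁) := fun t ht => by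
    rw [hu2 t ht]; ring
  have hI₁ := intervalIntegrable_of_eqOn_affine hT₁ hu1'
  have hI₂ := intervalIntegrable_of_eqOn_affine h₁₂ hu2'
  have hI₃ := intervalIntegrable_of_eqOn_affine h₂₃ hu3
  have hu₀ : u 0 = u₁ := by simpa using hu1 0 ⟨le_rfl, hT₁⟩
  have huT₁ : u T₁ = u₁ + β * T₁ := hu1 T₁ ⟨hT₁, le_rfl⟩
  have huT₁₂ : u (T₁ + T₂) = u T₁ - f_fw * T₂ := by simpa using hu2 (T₁ + T₂) ⟨h₁₂, le_rfl⟩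
  have huT : u (T / 2) = u (T₁ + T₂) + β * (T / 2 - (T₁ + T₂)) := hu3 (T / 2) ⟨h₂₃, le_rfl⟩
  have hhalf : ∫ t in 0..T / 2, u t = T / 2 * (u₁ + β * T₁ - f_fw * T₂ / 2) := by
    rw [← integral_add_adjacent_intervals (hI₁.trans hI₂) hI₃,
      ← integral_add_adjacent_intervals hI₁ hI₂,
      integral_eq_trapezoid_of_eqOn_affine hT₁ hu1',
      integral_eq_trapezoid_of_eqOn_affine h₁₂ hu2',
      integral_eq_trapezoid_of_eqOn_affine h₂₃ hu3, huT, huT₁₂, huT₁, hu₀]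
    linear_combination (T / 2 - 2 * T₁ - T₂) / 2 * (hbal - β * hsum)
  have hfull := integral_zero_two_mul_of_add_eq (by linarith) hper (hI₁.trans hI₂ |>.trans hI₃)
  rw [mul_div_cancel₀ T two_ne_zero] at hfull
  rw [hfull, hhalf, mul_div_eq_of_balance hT.ne' (by rw [hα, hβ]; ring) hsum hbal]
  field_simp

theorem average_velocity (T T₁ T₂ T₃ f_bw f_fw u₁ : ℝ) (u : ℝ → ℝ)
    (hffw : 0 < f_fw) (hfb : f_fw ≤ f_bw) (hT : 0 < T)
    (hT₁ : 0 ≤ T₁) (hT₂ : 0 ≤ T₂) (hT₃ : 0 ≤ T₃)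
    (α β ρ : ℝ) (hα : α = (f_bw + f_fw) / 2) (hβ : β = (f_bw - f_fw) / 2)
    (hρ : ρ = β / α)
    (hsum : T₁ + T₂ + T₃ = T / 2)
    (hT₂eq : T₂ = (T / 2) * (1 - ρ) / (1 + ρ))
    (hbal : β * (T₁ + T₃) = f_fw * T₂)
    (hu1 : ∀ t ∈ Set.Icc 0 T₁, u t = u₁ + β * t)
    (hu2 : ∀ t ∈ Set.Icc T₁ (T₁ + T₂), u t = u T₁ - f_fw * (t - T₁))
    (hu3 : ∀ t ∈ Set.Icc (T₁ + T₂) (T / 2),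
      u t = u (T₁ + T₂) + β * (t - (T₁ + T₂)))
    (hper : ∀ t ∈ Set.Icc 0 (T / 2), u (t + T / 2) = u t) :
    (1 / T) * ∫ t in (0 : ℝ)..T, u t = u₁ + β * T₁ - T * f_fw * β / (4 * α) :=
  average_velocity_general T T₁ T₂ T₃ f_bw f_fw u₁ u hT hT₁ hT₂ hT₃ α β hα hβ hsum hbal hu1 hu2 hu3
    hper
end

section
/- Let G(t) = ∫_a^t F with F : [a,b] → [f_bw, f_u], 0 < f_bw < f_u, and fix m ∈ (a,b) and prescribed values G(m) = c₁, G(b) = c₂ with c₂ > c₁ > 0, f_bw(m-a) ≤ c₁ ≤ f_u(m-a), f_bw(b-m) ≤ c₂-c₁ ≤ f_u(b-m). Then the infimum of J(F) = ∫_a^m G(t) dt − ∫_m^b G(t) dt over admissible F is attained by the three-piece bang-bang control F = f_bw on [a, a+τ₁], F = f_u on (a+τ₁, m+τ₂], F = f_bw on (m+τ₂, b], where τ₁ = (f_u(m-a) - c₁)/(f_u - f_bw) and τ₂ = ((c₂-c₁) - f_bw(b-m))/(f_u - f_bw). -/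
/-!
With `G(t) = ∫ₐᵗ F`, the cost is `∫ₐᵐ G - ∫ₘᵇ G`, so it suffices to make `G` pointwise as
small as possible on `[a, m]` and as large as possible on `[m, b]`. Between the prescribed
values `G(a) = 0`, `G(m) = c₁`, `G(b) = c₂`, the lowest admissible path climbs at the minimal
rate `f_bw` first and at the maximal rate `f_u` afterwards, while the highest one does the
opposite: if `F*` lies below `F` before a switching time and above it after, and both have the
same integral over the interval, then `∫ F* ≤ ∫ F` over every initial segment. The
low-high-low control realises both extremal paths at once.
-/

open MeasureTheory intervalIntegral Set

/-- The low-high-low three-piece bang-bang control with switching times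
`a + τ₁` and `m + τ₂`. -/
noncomputable def lowHighLow (a m τ₁ τ₂ f_bw f_u : ℝ) : ℝ → ℝ := fun t =>
  if t ≤ a + τ₁ then f_bw else if t ≤ m + τ₂ then f_u else f_bw

/-- The part of the work over one period that depends on the force `F`, with `∫ₐᵗ F` the
extension at time `t` and `m` the time of minimal extension. -/
noncomputable def variableWork (a m b : ℝ) (F : ℝ → ℝ) : ℝ :=
  (∫ t in a..m, ∫ s in a..t, F s) - ∫ t in m..b, ∫ s in a..t, F s

theorem primitive_le_primitive_of_crossing {f g : ℝ → ℝ} {a x p y : ℝ}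
    (hf_ax : IntervalIntegrable f volume a x) (hg_ax : IntervalIntegrable g volume a x)
    (hf : IntervalIntegrable f volume x y) (hg : IntervalIntegrable g volume x y)
    (hx : ∫ s in a..x, g s = ∫ s in a..x, f s) (hy : ∫ s in a..y, g s = ∫ s in a..y, f s)
    (hbelow : ∀ s ∈ Ioo x p, g s ≤ f s) (habove : ∀ s ∈ Ioo p y, f s ≤ g s) :
    ∀ t ∈ Icc x y, ∫ s in a..t, g s ≤ ∫ s in a..t, f s := by
  intro t ⟨hxt, hty⟩
  have sub_xt : uIcc x t ⊆ uIcc x y := uIcc_subset_uIcc_left (mem_uIcc_of_le hxt hty)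
  have sub_ty : uIcc t y ⊆ uIcc x y := uIcc_subset_uIcc_right (mem_uIcc_of_le hxt hty)
  rcases le_or_gt t p with htp | hpt
  · have hmono : ∫ s in x..t, g s ≤ ∫ s in x..t, f s :=
      integral_mono_on_of_le_Ioo hxt (hg.mono_set sub_xt) (hf.mono_set sub_xt)
        fun s hs => hbelow s ⟨hs.1, hs.2.trans_le htp⟩
    rw [← integral_add_adjacent_intervals hg_ax (hg.mono_set sub_xt),
      ← integral_add_adjacent_intervals hf_ax (hf.mono_set sub_xt)]
    linarith
  · have hmono : ∫ s in t..y, f s ≤ ∫ s in t..y, g s :=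
      integral_mono_on_of_le_Ioo hty (hf.mono_set sub_ty) (hg.mono_set sub_ty)
        fun s hs => habove s ⟨hpt.trans hs.1, hs.2⟩
    have hg_at := hg_ax.trans (hg.mono_set sub_xt)
    have hf_at := hf_ax.trans (hf.mono_set sub_xt)
    rw [← integral_add_adjacent_intervals hg_at (hg.mono_set sub_ty),
      ← integral_add_adjacent_intervals hf_at (hf.mono_set sub_ty)] at hy
    linarith

theorem IntervalIntegrable.primitive {f : ℝ → ℝ} {a b x y : ℝ}
    (hf : IntervalIntegrable f volume a b) (hx : x ∈ uIcc a b) (hy : y ∈ uIcc a b) :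
    IntervalIntegrable (fun t => ∫ s in a..t, f s) volume x y :=
  ((continuousOn_primitive_interval' hf left_mem_uIcc).mono
    (uIcc_subset_uIcc hx hy)).intervalIntegrable

theorem variableWork_le_of_primitive_le {f g : ℝ → ℝ} {a m b : ℝ} (ham : a ≤ m) (hmb : m ≤ b)
    (hf : IntervalIntegrable f volume a b) (hg : IntervalIntegrable g volume a b)
    (hbelow : ∀ t ∈ Icc a m, ∫ s in a..t, g s ≤ ∫ s in a..t, f s)
    (habove : ∀ t ∈ Icc m b, ∫ s in a..t, f s ≤ ∫ s in a..t, g s) :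
    variableWork a m b g ≤ variableWork a m b f := by
  have ha : a ∈ uIcc a b := left_mem_uIcc
  have hm : m ∈ uIcc a b := mem_uIcc_of_le ham hmb
  have hb : b ∈ uIcc a b := right_mem_uIcc
  have h₁ := integral_mono_on ham (hg.primitive ha hm) (hf.primitive ha hm) hbelow
  have h₂ := integral_mono_on hmb (hf.primitive hm hb) (hg.primitive hm hb) habove
  unfold variableWork
  linarith

theorem low_then_high_split {lo hi L c : ℝ} (hlohi : lo < hi) (hlo : lo * L ≤ c)
    (hhi : c ≤ hi * L) :
    0 ≤ (hi * L - c) / (hi - lo) ∧ (hi * L - c) / (hi - lo) ≤ L ∧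
      lo * ((hi * L - c) / (hi - lo)) + hi * (L - (hi * L - c) / (hi - lo)) = c := by
  have hd : 0 < hi - lo := sub_pos.2 hlohi
  refine ⟨div_nonneg (by linarith) hd.le, ?_, ?_⟩
  · rw [div_le_iff₀ hd]; linarith
  · field_simp; ring

theorem high_then_low_split {lo hi L c : ℝ} (hlohi : lo < hi) (hlo : lo * L ≤ c)
    (hhi : c ≤ hi * L) :
    0 ≤ (c - lo * L) / (hi - lo) ∧ (c - lo * L) / (hi - lo) ≤ L ∧
      hi * ((c - lo * L) / (hi - lo)) + lo * (L - (c - lo * L) / (hi - lo)) = c := by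
  have hd : 0 < hi - lo := sub_pos.2 hlohi
  refine ⟨div_nonneg (by linarith) hd.le, ?_, ?_⟩
  · rw [div_le_iff₀ hd]; linarith
  · field_simp; ring

theorem integral_eq_const_mul_of_eqOn_Ioo {f : ℝ → ℝ} {x y c : ℝ} (hxy : x ≤ y)
    (h : EqOn f (fun _ => c) (Ioo x y)) : ∫ s in x..y, f s = c * (y - x) := by
  rw [integral_congr_Ioo_of_le hxy h, intervalIntegral.integral_const, smul_eq_mul, mul_comm]

section lowHighLow

variable {a m b τ₁ τ₂ f_bw f_u t : ℝ}

theorem lowHighLow_of_le (h : t ≤ a + τ₁) : lowHighLow a m τ₁ τ₂ f_bw f_u t = f_bw :=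
  if_pos h

theorem lowHighLow_of_lt_of_le (h₁ : a + τ₁ < t) (h₂ : t ≤ m + τ₂) :
    lowHighLow a m τ₁ τ₂ f_bw f_u t = f_u := by
  simp only [lowHighLow, if_neg h₁.not_ge, if_pos h₂]

theorem lowHighLow_of_lt (h₀ : a + τ₁ ≤ m + τ₂) (h : m + τ₂ < t) :
    lowHighLow a m τ₁ τ₂ f_bw f_u t = f_bw := by
  simp only [lowHighLow, if_neg (h₀.trans_lt h).not_ge, if_neg h.not_ge]

theorem intervalIntegrable_lowHighLow (x y : ℝ) :
    IntervalIntegrable (lowHighLow a m τ₁ τ₂ f_bw f_u) volume x y := by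
  have hmeas : Measurable (lowHighLow a m τ₁ τ₂ f_bw f_u) :=
    measurable_const.ite measurableSet_Iic (measurable_const.ite measurableSet_Iic measurable_const)
  refine (intervalIntegrable_const (c := |f_bw| + |f_u|)).mono_fun'
    hmeas.aestronglyMeasurable (Filter.Eventually.of_forall fun t => ?_)
  simp only [lowHighLow, Real.norm_eq_abs]
  split_ifs <;> linarith [abs_nonneg f_bw, abs_nonneg f_u]

theorem integral_lowHighLow_low_high (h₁ : 0 ≤ τ₁) (h₂ : a + τ₁ ≤ m) (h₃ : 0 ≤ τ₂) :
    ∫ s in a..m, lowHighLow a m τ₁ τ₂ f_bw f_u s = f_bw * τ₁ + f_u * (m - a - τ₁) := by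
  rw [← integral_add_adjacent_intervals (b := a + τ₁) (intervalIntegrable_lowHighLow _ _)
    (intervalIntegrable_lowHighLow _ _),
    integral_eq_const_mul_of_eqOn_Ioo (by linarith) fun s hs => lowHighLow_of_le hs.2.le,
    integral_eq_const_mul_of_eqOn_Ioo h₂ fun s hs =>
      lowHighLow_of_lt_of_le hs.1 (by linarith [hs.2])]
  ring

theorem integral_lowHighLow_high_low (h₁ : a + τ₁ ≤ m) (h₂ : 0 ≤ τ₂) (h₃ : m + τ₂ ≤ b) :
    ∫ s in m..b, lowHighLow a m τ₁ τ₂ f_bw f_u s = f_u * τ₂ + f_bw * (b - m - τ₂) := by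
  rw [← integral_add_adjacent_intervals (b := m + τ₂) (intervalIntegrable_lowHighLow _ _)
    (intervalIntegrable_lowHighLow _ _),
    integral_eq_const_mul_of_eqOn_Ioo (by linarith) fun s hs =>
      lowHighLow_of_lt_of_le (h₁.trans_lt hs.1) hs.2.le,
    integral_eq_const_mul_of_eqOn_Ioo h₃ fun s hs => lowHighLow_of_lt (by linarith) hs.1]
  ring

end lowHighLow

theorem three_piece_bang_bang_min_general (a m b f_bw f_u c₁ c₂ : ℝ)
    (hbu : f_bw < f_u)
    (hc₁lo : f_bw * (m - a) ≤ c₁) (hc₁hi : c₁ ≤ f_u * (m - a))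
    (hc₂lo : f_bw * (b - m) ≤ c₂ - c₁) (hc₂hi : c₂ - c₁ ≤ f_u * (b - m)) :
    ∀ F : ℝ → ℝ, IntervalIntegrable F volume a b →
      (∀ t ∈ Set.Icc a b, F t ∈ Set.Icc f_bw f_u) →
      (∫ t in a..m, F t) = c₁ → (∫ t in a..b, F t) = c₂ →
      ((∫ t in a..m, ∫ s in a..t,
          lowHighLow a m ((f_u * (m - a) - c₁) / (f_u - f_bw))
            (((c₂ - c₁) - f_bw * (b - m)) / (f_u - f_bw)) f_bw f_u s) -
        ∫ t in m..b, ∫ s in a..t,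
          lowHighLow a m ((f_u * (m - a) - c₁) / (f_u - f_bw))
            (((c₂ - c₁) - f_bw * (b - m)) / (f_u - f_bw)) f_bw f_u s) ≤
      (∫ t in a..m, ∫ s in a..t, F s) - ∫ t in m..b, ∫ s in a..t, F s := by
  intro F hF hFbnd hFm hFb
  obtain ⟨hτ₁, hτ₁L, hτ₁c⟩ := low_then_high_split hbu hc₁lo hc₁hi
  obtain ⟨hτ₂, hτ₂L, hτ₂c⟩ := high_then_low_split hbu hc₂lo hc₂hi
  set τ₁ := (f_u * (m - a) - c₁) / (f_u - f_bw)
  set τ₂ := ((c₂ - c₁) - f_bw * (b - m)) / (f_u - f_bw)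
  have hFs_am : ∫ s in a..m, lowHighLow a m τ₁ τ₂ f_bw f_u s = c₁ := by
    rw [integral_lowHighLow_low_high hτ₁ (by linarith) hτ₂]; linarith
  have hFs_ab : ∫ s in a..b, lowHighLow a m τ₁ τ₂ f_bw f_u s = c₂ := by
    rw [← integral_add_adjacent_intervals (intervalIntegrable_lowHighLow a m)
      (intervalIntegrable_lowHighLow m b), hFs_am,
      integral_lowHighLow_high_low (by linarith) hτ₂ (by linarith)]
    linarith
  have hm : m ∈ uIcc a b := mem_uIcc_of_le (by linarith) (by linarith)
  have hF_am : IntervalIntegrable F volume a m := hF.mono_set (uIcc_subset_uIcc_left hm)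
  have hF_mb : IntervalIntegrable F volume m b := hF.mono_set (uIcc_subset_uIcc_right hm)
  have hF_lo : ∀ s ∈ Ioo a b, f_bw ≤ F s := fun s hs => (hFbnd s (Ioo_subset_Icc_self hs)).1
  have hF_hi : ∀ s ∈ Ioo a b, F s ≤ f_u := fun s hs => (hFbnd s (Ioo_subset_Icc_self hs)).2
  refine variableWork_le_of_primitive_le (by linarith) (by linarith) hF
    (intervalIntegrable_lowHighLow a b) ?_ ?_
  · exact primitive_le_primitive_of_crossing (p := a + τ₁) (by simp) (by simp)
      hF_am (intervalIntegrable_lowHighLow a m) (by simp) (hFs_am.trans hFm.symm)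
      (fun s hs => by rw [lowHighLow_of_le hs.2.le]; exact hF_lo s ⟨hs.1, by linarith [hs.2]⟩)
      (fun s hs => by
        rw [lowHighLow_of_lt_of_le hs.1 (by linarith [hs.2])]
        exact hF_hi s ⟨by linarith [hs.1], by linarith [hs.2]⟩)
  · exact primitive_le_primitive_of_crossing (p := m + τ₂) (intervalIntegrable_lowHighLow a m)
      hF_am (intervalIntegrable_lowHighLow m b) hF_mb (hFm.trans hFs_am.symm)
      (hFb.trans hFs_ab.symm)
      (fun s hs => by
        rw [lowHighLow_of_lt_of_le (by linarith [hs.1]) hs.2.le]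
        exact hF_hi s ⟨by linarith [hs.1], by linarith [hs.2]⟩)
      (fun s hs => by
        rw [lowHighLow_of_lt (by linarith) hs.1]
        exact hF_lo s ⟨by linarith [hs.1], hs.2⟩)

theorem three_piece_bang_bang_min (a m b f_bw f_u c₁ c₂ : ℝ)
    (ham : a < m) (hmb : m < b) (hbw : 0 < f_bw) (hbu : f_bw < f_u)
    (hc₁pos : 0 < c₁) (hc₁₂ : c₁ < c₂)
    (hc₁lo : f_bw * (m - a) ≤ c₁) (hc₁hi : c₁ ≤ f_u * (m - a))
    (hc₂lo : f_bw * (b - m) ≤ c₂ - c₁) (hc₂hi : c₂ - c₁ ≤ f_u * (b - m)) :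
    ∀ F : ℝ → ℝ, IntervalIntegrable F volume a b →
      (∀ t ∈ Set.Icc a b, F t ∈ Set.Icc f_bw f_u) →
      (∫ t in a..m, F t) = c₁ → (∫ t in a..b, F t) = c₂ →
      ((∫ t in a..m, ∫ s in a..t,
          lowHighLow a m ((f_u * (m - a) - c₁) / (f_u - f_bw))
            (((c₂ - c₁) - f_bw * (b - m)) / (f_u - f_bw)) f_bw f_u s) -
        ∫ t in m..b, ∫ s in a..t,
          lowHighLow a m ((f_u * (m - a) - c₁) / (f_u - f_bw))
            (((c₂ - c₁) - f_bw * (b - m)) / (f_u - f_bw)) f_bw f_u s) ≤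
      (∫ t in a..m, ∫ s in a..t, F s) - ∫ t in m..b, ∫ s in a..t, F s :=
  three_piece_bang_bang_min_general a m b f_bw f_u c₁ c₂ hbu hc₁lo hc₁hi hc₂lo hc₂hi
end

section
/- Suppose v : [0,T] → ℝ is continuous, v(t+T/2) = -v(t) on [0,T/2], v is negative on [0, s) and positive on (s, T/2] for some s ∈ (0, T/2), and d(t) = d₀ + 2∫_0^t v. Then over [0,T], d attains its minimum at t = s and its maximum at t = s + T/2, and the excursion satisfies max d - min d = 2∫_s^{s+T/2} v(t) dt. -/
open MeasureTheory intervalIntegral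

theorem excursion_formula (T d₀ s : ℝ) (hT : 0 < T)
    (hs : s ∈ Set.Ioo 0 (T / 2)) (v d : ℝ → ℝ)
    (hv : ContinuousOn v (Set.Icc 0 T))
    (hanti : ∀ t ∈ Set.Icc 0 (T / 2), v (t + T / 2) = -v t)
    (hneg : ∀ t ∈ Set.Ico 0 s, v t < 0)
    (hpos : ∀ t ∈ Set.Ioc s (T / 2), 0 < v t)
    (hd : ∀ t, d t = d₀ + 2 * ∫ r in (0 : ℝ)..t, v r) :
    (∀ t ∈ Set.Icc 0 T, d s ≤ d t ∧ d t ≤ d (s + T / 2)) ∧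
    d (s + T / 2) - d s = 2 * ∫ t in s..(s + T / 2), v t := by
  obtain ⟨hs0, hsT2⟩ := hs
  have hT2 : 0 < T / 2 := by linarith
  have hsle : s ≤ T / 2 := hsT2.le
  have hsT : s + T / 2 ≤ T := by linarith
  -- integrability
  have hint : ∀ a b : ℝ, 0 ≤ a → a ≤ b → b ≤ T → IntervalIntegrable v volume a b := by
    intro a b ha hab hb
    exact (hv.mono (by rw [Set.uIcc_of_le hab]; exact Set.Icc_subset_Icc ha hb)).intervalIntegrable
  -- key difference formula
  have key : ∀ a b : ℝ, 0 ≤ a → a ≤ b → b ≤ T →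
      d b - d a = 2 * ∫ r in a..b, v r := by
    intro a b ha hab hb
    have h1 : (∫ r in (0:ℝ)..a, v r) + ∫ r in a..b, v r = ∫ r in (0:ℝ)..b, v r :=
      integral_add_adjacent_intervals (hint 0 a le_rfl ha (hab.trans hb))
        (hint a b ha hab hb)
    rw [hd, hd]; linarith
  -- v s = 0
  have hvs : v s = 0 := by
    have hcw : ContinuousWithinAt v (Set.Icc 0 T) s :=
      hv s ⟨hs0.le, by linarith⟩
    have h1 : v s ≤ 0 := by
      have hne : (nhdsWithin s (Set.Ico 0 s)).NeBot := by
        refine mem_closure_iff_nhdsWithin_neBot.mp ?_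
        rw [closure_Ico hs0.ne]; exact ⟨hs0.le, le_rfl⟩
      refine le_of_tendsto (hcw.mono (fun x (hx : x ∈ Set.Ico 0 s) => ⟨hx.1, by linarith [hx.2]⟩)) ?_
      exact eventually_mem_nhdsWithin.mono fun x hx => (hneg x hx).le
    have h2 : 0 ≤ v s := by
      have hne : (nhdsWithin s (Set.Ioc s (T/2))).NeBot := by
        refine mem_closure_iff_nhdsWithin_neBot.mp ?_
        rw [closure_Ioc hsT2.ne]; exact ⟨le_rfl, hsle⟩
      refine ge_of_tendsto (hcw.mono (fun x (hx : x ∈ Set.Ioc s (T/2)) => ⟨by linarith [hx.1], by linarith [hx.2]⟩)) ?_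
      exact eventually_mem_nhdsWithin.mono fun x hx => (hpos x hx).le
    linarith
  -- sign on closed intervals
  have hneg' : ∀ u ∈ Set.Icc 0 s, v u ≤ 0 := by
    intro u hu
    rcases eq_or_lt_of_le hu.2 with h | h
    · rw [h, hvs]
    · exact (hneg u ⟨hu.1, h⟩).le
  have hpos' : ∀ u ∈ Set.Icc s (T/2), 0 ≤ v u := by
    intro u hu
    rcases eq_or_lt_of_le hu.1 with h | h
    · rw [← h, hvs]
    · exact (hpos u ⟨h, hu.2⟩).le
  have hpos2 : ∀ u ∈ Set.Icc (T/2) (s + T/2), 0 ≤ v u := by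
    intro u hu
    have ht : u - T/2 ∈ Set.Icc (0:ℝ) (T/2) := ⟨by linarith [hu.1], by linarith [hu.2]⟩
    have h1 := hanti _ ht
    rw [sub_add_cancel] at h1
    have h2 := hneg' (u - T/2) ⟨by linarith [hu.1], by linarith [hu.2]⟩
    linarith [h1, h2]
  have hneg2 : ∀ u ∈ Set.Icc (s + T/2) T, v u ≤ 0 := by
    intro u hu
    have ht : u - T/2 ∈ Set.Icc (0:ℝ) (T/2) := ⟨by linarith [hu.1], by linarith [hu.2]⟩
    have h1 := hanti _ ht
    rw [sub_add_cancel] at h1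
    have h2 := hpos' (u - T/2) ⟨by linarith [hu.1], by linarith [hu.2]⟩
    linarith [h1, h2]
  -- nonpos integral helper
  have inonpos : ∀ a b : ℝ, a ≤ b → (∀ u ∈ Set.Icc a b, v u ≤ 0) →
      (∫ r in a..b, v r) ≤ 0 := by
    intro a b hab hf
    have := intervalIntegral.integral_nonneg (f := fun u => -v u) (μ := volume) hab
      (fun u hu => neg_nonneg.mpr (hf u hu))
    rw [intervalIntegral.integral_neg] at this
    linarith
  -- d T = d 0
  have hTT : T / 2 + T / 2 = T := by ring
  have e1 : (∫ r in (T/2)..T, v r) = - ∫ r in (0:ℝ)..(T/2), v r := by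
    have h1 : (∫ x in (0:ℝ)..(T/2), v (x + T/2)) = ∫ x in ((0:ℝ)+T/2)..((T/2)+T/2), v x :=
      intervalIntegral.integral_comp_add_right v (T/2)
    rw [zero_add, hTT] at h1
    rw [← h1]
    rw [intervalIntegral.integral_congr (g := fun x => -v x)
      (fun x hx => hanti x (by rwa [Set.uIcc_of_le hT2.le] at hx))]
    exact intervalIntegral.integral_neg
  have hdT0 : d T = d 0 := by
    have h1 : (∫ r in (0:ℝ)..(T/2), v r) + ∫ r in (T/2)..T, v r = ∫ r in (0:ℝ)..T, v r :=
      integral_add_adjacent_intervals (hint 0 (T/2) le_rfl hT2.le (by linarith))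
        (hint (T/2) T hT2.le (by linarith) le_rfl)
    have h2 := key 0 T le_rfl hT.le le_rfl
    rw [← h1, e1] at h2
    linarith
  -- monotonicity pieces
  have M1 : ∀ t ∈ Set.Icc (0:ℝ) s, d s ≤ d t ∧ d t ≤ d 0 := by
    intro t ht
    constructor
    · have h := key t s ht.1 ht.2 (by linarith)
      have hI := inonpos t s ht.2 (fun u hu => hneg' u ⟨ht.1.trans hu.1, hu.2⟩)
      linarith
    · have h := key 0 t le_rfl ht.1 (by linarith [ht.2])
      have hI := inonpos 0 t ht.1 (fun u hu => hneg' u ⟨hu.1, hu.2.trans ht.2⟩)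
      linarith
  have M2 : ∀ t ∈ Set.Icc s (T/2), d s ≤ d t ∧ d t ≤ d (T/2) := by
    intro t ht
    constructor
    · have h := key s t hs0.le ht.1 (by linarith [ht.2])
      have hI := intervalIntegral.integral_nonneg (μ := volume) ht.1
        (fun u hu => hpos' u ⟨hu.1, hu.2.trans ht.2⟩)
      linarith
    · have h := key t (T/2) (hs0.le.trans ht.1) ht.2 (by linarith)
      have hI := intervalIntegral.integral_nonneg (μ := volume) ht.2
        (fun u hu => hpos' u ⟨ht.1.trans hu.1, hu.2⟩)
      linarith
  have M3 : ∀ t ∈ Set.Icc (T/2) (s + T/2), d (T/2) ≤ d t ∧ d t ≤ d (s + T/2) := by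
    intro t ht
    constructor
    · have h := key (T/2) t hT2.le ht.1 (by linarith [ht.2])
      have hI := intervalIntegral.integral_nonneg (μ := volume) ht.1
        (fun u hu => hpos2 u ⟨hu.1, hu.2.trans ht.2⟩)
      linarith
    · have h := key t (s + T/2) (hT2.le.trans ht.1) ht.2 (by linarith)
      have hI := intervalIntegral.integral_nonneg (μ := volume) ht.2
        (fun u hu => hpos2 u ⟨ht.1.trans hu.1, hu.2⟩)
      linarith
  have M4 : ∀ t ∈ Set.Icc (s + T/2) T, d T ≤ d t ∧ d t ≤ d (s + T/2) := by
    intro t ht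
    have hst0 : 0 ≤ s + T/2 := by linarith
    constructor
    · have h := key t T (hst0.trans ht.1) ht.2 le_rfl
      have hI := inonpos t T ht.2 (fun u hu => hneg2 u ⟨ht.1.trans hu.1, hu.2⟩)
      linarith
    · have h := key (s + T/2) t hst0 ht.1 ht.2
      have hI := inonpos (s + T/2) t ht.1 (fun u hu => hneg2 u ⟨hu.1, hu.2.trans ht.2⟩)
      linarith
  -- chain facts
  have c1 : d s ≤ d (T/2) := (M2 (T/2) ⟨hsle, le_rfl⟩).1
  have c2 : d (T/2) ≤ d (s + T/2) := (M3 (T/2) ⟨le_rfl, by linarith⟩).2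
  have c3 : d 0 ≤ d (s + T/2) := hdT0 ▸ (M4 T ⟨hsT, le_rfl⟩).2
  have c4 : d s ≤ d 0 := (M1 0 ⟨le_rfl, hs0.le⟩).1
  refine ⟨?_, key s (s + T/2) hs0.le (by linarith) hsT⟩
  intro t ht
  rcases le_or_gt t s with h1 | h1
  · exact ⟨(M1 t ⟨ht.1, h1⟩).1, (M1 t ⟨ht.1, h1⟩).2.trans c3⟩
  rcases le_or_gt t (T/2) with h2 | h2
  · exact ⟨(M2 t ⟨h1.le, h2⟩).1, ((M2 t ⟨h1.le, h2⟩).2).trans c2⟩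
  rcases le_or_gt t (s + T/2) with h3 | h3
  · exact ⟨c1.trans (M3 t ⟨h2.le, h3⟩).1, (M3 t ⟨h2.le, h3⟩).2⟩
  · exact ⟨(c4.trans (hdT0 ▸ (M4 t ⟨h3.le, ht.2⟩).1)), (M4 t ⟨h3.le, ht.2⟩).2⟩
end
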